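/- Every D-inverse constellation P has an inverse pre-constellation reduct in which the inverse of each element is its D-inverse, and which satisfies: (i) for idempotents e, f, if e·f and f·e both exist they are equal; (ii) if s·e exists for an idempotent e, then s·e = s. -/
import Mathlib


open scoped Classical

/-- A constellation: a partial binary operation (encoded via `Option`) together with a
domain operation `D`, satisfying (Const1), (Const2) and (Const3). -/
structure Constellation (Q : Type*) where
  mul : Q → Q → Option Q
  D : Q → Q
  const1 : ∀ x y z w v, mul y z = some w → mul x w = some v →
    ∃ u, mul x y = some u ∧ mul u z = some v
  const2 : ∀ x y z u v, mul x y = some u → mul y z = some v → (mul x v).isSome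
  D_mul : ∀ x, mul (D x) x = some x
  D_ri : ∀ x s t, mul s (D x) = some t → t = s
  D_unique : ∀ x e, (∀ s t, mul s e = some t → t = s) → mul e x = some x → e = D x

namespace Constellation
variable {Q : Type*} (C : Constellation Q)

/-- `e` is a projection, i.e. an element of `D(Q)`. -/
def IsProj (e : Q) : Prop := ∃ s, e = C.D s

/-- `e` is a right identity. -/
def IsRightId (e : Q) : Prop := ∀ s t, C.mul s e = some t → t = s

/-- `e` is an idempotent. -/
def Idem (e : Q) : Prop := C.mul e e = some e

/-- D-regularity: every `a` has some `b` with `a·b = D(a)`. -/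
def DRegular : Prop := ∀ a, ∃ b, C.mul a b = some (C.D a)

/-- Normality: projections `e`, `f` with `e·f` and `f·e` both existing are equal. -/
def Normal : Prop := ∀ e f, C.IsProj e → C.IsProj f →
  (C.mul e f).isSome → (C.mul f e).isSome → e = f

/-- `t` is a D-inverse of `s`. -/
def IsDInv (s t : Q) : Prop := C.mul s t = some (C.D s) ∧ C.mul t s = some (C.D t)

/-- A D-inverse constellation: every element has a unique D-inverse. -/
def DInverse : Prop := ∀ s, ∃! t, C.IsDInv s t

/-- Right cancellativity. -/
def RightCancellative : Prop := ∀ a b c x, C.mul a c = some x → C.mul b c = some x → a = b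

end Constellation

/-- `t` is an inverse of `s` in the pre-constellation sense, for a partial product
`mul`: `s = s·(t·s)` and `t = t·(s·t)`. -/
def PreInv {P : Type*} (mul : P → P → Option P) (s t : P) : Prop :=
  (∃ w, mul t s = some w ∧ mul s w = some s) ∧
  (∃ v, mul s t = some v ∧ mul t v = some t)

namespace ConstellationAux

variable {Q : Type*} (C : Constellation Q)

lemma D_of_mul {x y u : Q} (hxy : C.mul x y = some u) : C.D u = C.D x := by
  -- first: D x · u exists and equals u
  obtain ⟨val, hval⟩ := Option.isSome_iff_exists.mp
    (C.const2 (C.D x) x y x u (C.D_mul x) hxy)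
  obtain ⟨u', hu'1, hu'2⟩ := C.const1 (C.D x) x y u val hxy hval
  have hx : u' = x := by
    have hd := C.D_mul x
    rw [hd] at hu'1; exact (Option.some_injective _ hu'1.symm)
  rw [hx] at hu'2
  have hvu : val = u := by rw [hxy] at hu'2; exact Option.some_injective _ hu'2.symm
  rw [hvu] at hval
  exact (C.D_unique u (C.D x) (C.D_ri x) hval).symm

lemma rightCancel (h : C.DInverse) : C.RightCancellative := by
  intro a b c x hac hbc
  obtain ⟨c', ⟨hcc', _⟩, _⟩ := h c
  have key : ∀ d, C.mul d c = some x → C.mul x c' = some d := by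
    intro d hdc
    obtain ⟨val, hval⟩ := Option.isSome_iff_exists.mp
      (C.const2 d c c' x (C.D c) hdc hcc')
    have hvd : val = d := C.D_ri c d val hval
    rw [hvd] at hval
    obtain ⟨u, hu1, hu2⟩ := C.const1 d c c' (C.D c) d hcc' hval
    have hux : u = x := by rw [hdc] at hu1; exact Option.some_injective _ hu1.symm
    rw [hux] at hu2
    exact hu2
  have h1 := key a hac
  have h2 := key b hbc
  rw [h1] at h2
  exact (Option.some_injective _ h2)

lemma mul_idem (h : C.DInverse) {s e u : Q} (he : C.Idem e)
    (hse : C.mul s e = some u) : u = s := by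
  obtain ⟨u', hu'1, hu'2⟩ := C.const1 s e e e u he hse
  have huu : u' = u := by rw [hse] at hu'1; exact Option.some_injective _ hu'1.symm
  rw [huu] at hu'2
  exact rightCancel C h u s e u hu'2 hse

lemma idem_eq_D (h : C.DInverse) {e : Q} (he : C.Idem e) : e = C.D e := by
  obtain ⟨e', ⟨hee', _⟩, _⟩ := h e
  obtain ⟨val, hval⟩ := Option.isSome_iff_exists.mp
    (C.const2 e e e' e (C.D e) he hee')
  have hv : val = e := C.D_ri e e val hval
  rw [hv] at hval
  obtain ⟨u, hu1, hu2⟩ := C.const1 e e e' (C.D e) e hee' hval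
  have hue : u = e := by rw [he] at hu1; exact Option.some_injective _ hu1.symm
  rw [hue] at hu2
  rw [hee'] at hu2
  exact Option.some_injective _ hu2.symm

end ConstellationAux

/-- Every D-inverse constellation has an inverse pre-constellation reduct in which the
inverse of each element is its D-inverse, satisfying: (i) for idempotents `e, f`, if
`e·f` and `f·e` both exist then they are equal; (ii) if `s·e` exists for an
idempotent `e`, then `s·e = s`. -/
theorem dInverse_reduct_is_inverse_preconstellation {Q : Type*} (C : Constellation Q)
    (h : C.DInverse) :
    (∀ s t, C.IsDInv s t → PreInv C.mul s t) ∧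
    (∀ s, ∃! t, PreInv C.mul s t) ∧
    (∀ e f u v, C.Idem e → C.Idem f →
      C.mul e f = some u → C.mul f e = some v → u = v) ∧
    (∀ s e u, C.Idem e → C.mul s e = some u → u = s) := by
  open ConstellationAux in
  have part1 : ∀ s t, C.IsDInv s t → PreInv C.mul s t := by
    intro s t ⟨hst, hts⟩
    constructor
    · refine ⟨C.D t, hts, ?_⟩
      obtain ⟨val, hval⟩ := Option.isSome_iff_exists.mp
        (C.const2 s t s (C.D s) (C.D t) hst hts)
      have : val = s := C.D_ri t s val hval
      rw [this] at hval; exact hval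
    · refine ⟨C.D s, hst, ?_⟩
      obtain ⟨val, hval⟩ := Option.isSome_iff_exists.mp
        (C.const2 t s t (C.D t) (C.D s) hts hst)
      have : val = t := C.D_ri s t val hval
      rw [this] at hval; exact hval
  have preinv_dinv : ∀ s t, PreInv C.mul s t → C.IsDInv s t := by
    intro s t ⟨⟨w, hw1, hw2⟩, ⟨v, hv1, hv2⟩⟩
    have hvidem : C.Idem v := by
      obtain ⟨u, hu1, hu2⟩ := C.const1 s t v t v hv2 hv1
      have huv : u = v := by rw [hv1] at hu1; exact Option.some_injective _ hu1.symm
      rw [huv] at hu2; exact hu2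
    have hwidem : C.Idem w := by
      obtain ⟨u, hu1, hu2⟩ := C.const1 t s w s w hw2 hw1
      have huw : u = w := by rw [hw1] at hu1; exact Option.some_injective _ hu1.symm
      rw [huw] at hu2; exact hu2
    have hv : v = C.D s := (idem_eq_D C h hvidem).trans (D_of_mul C hv1)
    have hw : w = C.D t := (idem_eq_D C h hwidem).trans (D_of_mul C hw1)
    exact ⟨hv ▸ hv1, hw ▸ hw1⟩
  refine ⟨part1, ?_, ?_, fun s e u he hse => mul_idem C h he hse⟩
  · intro s
    obtain ⟨t₀, ht₀, huniq⟩ := h s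
    exact ⟨t₀, part1 s t₀ ht₀, fun t ht => huniq t (preinv_dinv s t ht)⟩
  · intro e f u v he hf hef hfe
    have hu : u = e := mul_idem C h hf hef
    have hv : v = f := mul_idem C h he hfe
    rw [hu] at hef
    rw [hv] at hfe
    have he' : e = C.D e := idem_eq_D C h he
    have hf' : f = C.D f := idem_eq_D C h hf
    obtain ⟨t₀, _, huniq⟩ := h e
    have h1 : f = t₀ := huniq f ⟨by rw [← he']; exact hef, by rw [← hf']; exact hfe⟩
    have h2 : e = t₀ := huniq e ⟨by rw [← he']; exact he, by rw [← he']; exact he⟩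
    rw [hu, hv, h1, h2]
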